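/- Let N_X and N_Y be K-order networks over finite nonempty sets X and Y, both having the symmetry and identity properties, and let 1 ≤ p ≤ ∞. Then the p-norm of the vector of k-order network distances is a lower bound for the p-norm network distance: ‖(d^0(N_X,N_Y), d^1(N_X,N_Y), …, d^K(N_X,N_Y))‖_p ≤ d_p(N_X, N_Y). -/
import Mathlib


/-- The relationship functions of a `K`-order network over node set `X`:
for each order `k`, a real-valued function on `(k+1)`-tuples of nodes
(only the functions of order `k ≤ K` are relevant). -/
abbrev RelFun (X : Type*) : Type _ := (k : ℕ) → (Fin (k + 1) → X) → ℝ

/-- The relationship functions of orders `0 ≤ k ≤ K` take values in `[0,1]`. -/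
def RangeUnit {X : Type*} (K : ℕ) (r : RelFun X) : Prop :=
  ∀ k, k ≤ K → ∀ x : Fin (k + 1) → X, r k x ∈ Set.Icc (0 : ℝ) 1

/-- Symmetry property: the relationship value is invariant under reorderings of the tuple. -/
def SymmetricNet {X : Type*} (K : ℕ) (r : RelFun X) : Prop :=
  ∀ k, k ≤ K → ∀ (x : Fin (k + 1) → X) (σ : Equiv.Perm (Fin (k + 1))),
    r k (x ∘ σ) = r k x

/-- Identity property: a sub-tuple with the same set of distinct elements as the
full tuple has the same relationship value. -/
def IdentityNet {X : Type*} (K : ℕ) (r : RelFun X) : Prop :=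
  ∀ k k', k ≤ K → k' ≤ K → ∀ (x : Fin (k + 1) → X) (l : Fin (k' + 1) → Fin (k + 1)),
    Set.range (x ∘ l) = Set.range x → r k' (x ∘ l) = r k x

/-- A correspondence between `X` and `Y`: a set of pairs covering all of `X` and all of `Y`. -/
def IsCorrespondence {X Y : Type*} (C : Finset (X × Y)) : Prop :=
  (∀ x : X, ∃ y : Y, (x, y) ∈ C) ∧ (∀ y : Y, ∃ x : X, (x, y) ∈ C)

/-- The `k`-order network difference with respect to a correspondence `C`:
the maximum of `|r_X^k(x_{0:k}) - r_Y^k(y_{0:k})|` over all choices of pairs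
`(x_0,y_0), …, (x_k,y_k) ∈ C`. -/
noncomputable def Gamma {X Y : Type*} (rX : RelFun X) (rY : RelFun Y)
    (C : Finset (X × Y)) (k : ℕ) : ℝ :=
  sSup {d : ℝ | ∃ (x : Fin (k + 1) → X) (y : Fin (k + 1) → Y),
    (∀ i, (x i, y i) ∈ C) ∧ d = |rX k x - rY k y|}

/-- The `k`-order network distance: the minimum of `Γ^k(C)` over all correspondences. -/
noncomputable def netDist {X Y : Type*} (rX : RelFun X) (rY : RelFun Y) (k : ℕ) : ℝ :=
  sInf {d : ℝ | ∃ C : Finset (X × Y), IsCorrespondence C ∧ d = Gamma rX rY C k}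

open scoped ENNReal

/-- The `p`-norm network distance: the minimum over correspondences `C` of the vector
`p`-norm of `(Γ^0(C), …, Γ^K(C))`. -/
noncomputable def pNormDist {X Y : Type*} (K : ℕ) (p : ℝ≥0∞) [Fact (1 ≤ p)]
    (rX : RelFun X) (rY : RelFun Y) : ℝ :=
  sInf {d : ℝ | ∃ C : Finset (X × Y), IsCorrespondence C ∧
    d = ‖(WithLp.equiv p (Fin (K + 1) → ℝ)).symm
          (fun k : Fin (K + 1) => Gamma rX rY C (k : ℕ))‖}


-- Auxiliary lemmas ------------------------------------------------------

lemma piLp_norm_mono {n : ℕ} (p : ℝ≥0∞) [Fact (1 ≤ p)] (f g : Fin n → ℝ)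
    (h : ∀ i, |f i| ≤ |g i|) :
    ‖(WithLp.equiv p (Fin n → ℝ)).symm f‖ ≤ ‖(WithLp.equiv p (Fin n → ℝ)).symm g‖ := by
  rcases eq_or_ne p ∞ with rfl | hp
  · rw [PiLp.norm_eq_ciSup, PiLp.norm_eq_ciSup]
    exact ciSup_mono (Set.Finite.bddAbove (Set.finite_range _)) (fun i => h i)
  · have hpt : 0 < p.toReal := ENNReal.toReal_pos (by
      have := Fact.out (p := 1 ≤ p); intro h0; simp [h0] at this) hp
    rw [PiLp.norm_eq_sum hpt, PiLp.norm_eq_sum hpt]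
    apply Real.rpow_le_rpow (by positivity)
    · apply Finset.sum_le_sum
      intro i _
      exact Real.rpow_le_rpow (abs_nonneg _) (h i) hpt.le
    · positivity

section lemmas
variable {X Y : Type*} [Nonempty X] (K : ℕ) (rX : RelFun X) (rY : RelFun Y)

lemma gammaSet_nonempty (C : Finset (X × Y)) (hC : IsCorrespondence C) (k : ℕ) :
    {d : ℝ | ∃ (x : Fin (k + 1) → X) (y : Fin (k + 1) → Y),
      (∀ i, (x i, y i) ∈ C) ∧ d = |rX k x - rY k y|}.Nonempty := by
  obtain ⟨x0⟩ := ‹Nonempty X›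
  obtain ⟨y0, hy0⟩ := hC.1 x0
  exact ⟨_, fun _ => x0, fun _ => y0, fun _ => hy0, rfl⟩

set_option linter.unusedSectionVars false in
lemma gammaSet_bddAbove (hRX : RangeUnit K rX) (hRY : RangeUnit K rY) (C : Finset (X × Y)) (k : ℕ) (hk : k ≤ K) :
    BddAbove {d : ℝ | ∃ (x : Fin (k + 1) → X) (y : Fin (k + 1) → Y),
      (∀ i, (x i, y i) ∈ C) ∧ d = |rX k x - rY k y|} := by
  refine ⟨1, fun d hd => ?_⟩
  obtain ⟨x, y, _, rfl⟩ := hd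
  have h1 := hRX k hk x
  have h2 := hRY k hk y
  simp only [Set.mem_Icc] at h1 h2
  rw [abs_le]; constructor <;> linarith [h1.1, h1.2, h2.1, h2.2]

lemma gamma_nonneg (hRX : RangeUnit K rX) (hRY : RangeUnit K rY) (C : Finset (X × Y)) (hC : IsCorrespondence C) (k : ℕ) (hk : k ≤ K) :
    0 ≤ Gamma rX rY C k := by
  obtain ⟨d, hd⟩ := gammaSet_nonempty rX rY C hC k
  have hd' := hd
  obtain ⟨x, y, _, rfl⟩ := hd'
  exact le_trans (abs_nonneg _) (le_csSup (gammaSet_bddAbove K rX rY hRX hRY C k hk) hd)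

lemma netDist_le_gamma (hRX : RangeUnit K rX) (hRY : RangeUnit K rY) (C : Finset (X × Y)) (hC : IsCorrespondence C) (k : ℕ) (hk : k ≤ K) :
    netDist rX rY k ≤ Gamma rX rY C k := by
  apply csInf_le
  · refine ⟨0, fun d hd => ?_⟩
    obtain ⟨C', hC', rfl⟩ := hd
    exact gamma_nonneg K rX rY hRX hRY C' hC' k hk
  · exact ⟨C, hC, rfl⟩

lemma netDist_nonneg (hRX : RangeUnit K rX) (hRY : RangeUnit K rY) (k : ℕ) (hk : k ≤ K)
    (hne : ∃ C : Finset (X × Y), IsCorrespondence C) : 0 ≤ netDist rX rY k := by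
  obtain ⟨C, hC⟩ := hne
  refine le_csInf ⟨Gamma rX rY C k, ⟨C, hC, rfl⟩⟩ ?_
  rintro d ⟨C', hC', rfl⟩
  exact gamma_nonneg K rX rY hRX hRY C' hC' k hk

end lemmas

/-- For `K`-order networks with the symmetry and identity properties and `1 ≤ p ≤ ∞`,
the vector `p`-norm of the vector of `k`-order network distances is a lower bound for
the `p`-norm network distance. -/
theorem pNorm_netDist_le {X Y : Type*} [Fintype X] [Nonempty X] [Fintype Y] [Nonempty Y]
    (K : ℕ) (rX : RelFun X) (rY : RelFun Y)
    (hRX : RangeUnit K rX) (hSX : SymmetricNet K rX) (hIX : IdentityNet K rX)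
    (hRY : RangeUnit K rY) (hSY : SymmetricNet K rY) (hIY : IdentityNet K rY)
    (p : ℝ≥0∞) [Fact (1 ≤ p)] :
    ‖(WithLp.equiv p (Fin (K + 1) → ℝ)).symm
        (fun k : Fin (K + 1) => netDist rX rY (k : ℕ))‖ ≤ pNormDist K p rX rY := by
  have hcorr : IsCorrespondence (Finset.univ : Finset (X × Y)) :=
    ⟨fun x => ⟨Classical.arbitrary Y, Finset.mem_univ _⟩,
     fun y => ⟨Classical.arbitrary X, Finset.mem_univ _⟩⟩
  refine le_csInf ⟨_, ⟨Finset.univ, hcorr, rfl⟩⟩ ?_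
  rintro d ⟨C, hC, rfl⟩
  apply piLp_norm_mono
  intro k
  have hk : (k : ℕ) ≤ K := Nat.lt_succ_iff.mp k.isLt
  have h1 : 0 ≤ netDist rX rY (k : ℕ) :=
    netDist_nonneg K rX rY hRX hRY (k : ℕ) hk ⟨Finset.univ, hcorr⟩
  have h2 := netDist_le_gamma K rX rY hRX hRY C hC (k : ℕ) hk
  have h3 := gamma_nonneg K rX rY hRX hRY C hC (k : ℕ) hk
  rw [abs_of_nonneg h1, abs_of_nonneg h3]
  exact h2
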